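/- Let μ be a probability measure on ℝ, let f : ℝ → ℝ be measurable with (f(x) − a·x − b)² μ-integrable, and let q, ω > 0 and a, b ∈ ℝ. Then ∫ KL( N(f(x), q) ‖ N(a·x + b, ω) ) dμ(x) = 0 if and only if ω = q and f(x) = a·x + b for μ-almost every x. -/

import Mathlib

/-!
Between two Gaussians the log-likelihood ratio is a quadratic polynomial, so
`KL(N(m₁, v) ‖ N(m₂, w)) = (log (w / v) + (v + (m₁ - m₂)²) / w - 1) / 2`.
The integrand is therefore `c + (f x - a x - b)² / (2ω)` with `c = (log (ω / q) + q / ω - 1) / 2`.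
Since `log t ≤ t - 1` with equality only at `t = 1`, `c ≥ 0` with equality iff `q = ω`, and an
integral of the sum of two nonnegative terms vanishes iff both terms vanish almost everywhere.
-/

open MeasureTheory ProbabilityTheory Filter Real Topology
open scoped NNReal ENNReal Classical

/-- Kullback–Leibler divergence: `∫ log (dP/dQ) dP` if `P ≪ Q` (and the integral is defined),
`+∞` otherwise. -/
noncomputable def klDiv {α : Type*} [MeasurableSpace α] (P Q : Measure α) : EReal :=
  if P ≪ Q ∧ Integrable (llr P Q) P then ((∫ x, llr P Q x ∂P : ℝ) : EReal) else ⊤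

lemma integrable_sub_sq_gaussianReal (m : ℝ) (v : ℝ≥0) (c : ℝ) :
    Integrable (fun x ↦ (x - c) ^ 2) (gaussianReal m v) :=
  ((memLp_id_gaussianReal 2).sub (memLp_const c)).integrable_sq

lemma integral_sub_sq_gaussianReal (m : ℝ) (v : ℝ≥0) (c : ℝ) :
    ∫ x, (x - c) ^ 2 ∂gaussianReal m v = v + (m - c) ^ 2 := by
  have hvar := variance_eq_sub (μ := gaussianReal (m - c) v) (memLp_id_gaussianReal 2)
  simp only [variance_id_gaussianReal, Pi.pow_apply, id, integral_id_gaussianReal] at hvar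
  calc ∫ x, (x - c) ^ 2 ∂gaussianReal m v
      = ∫ y, y ^ 2 ∂(gaussianReal m v).map (· - c) :=
        (integral_map (by fun_prop) (by fun_prop) (f := fun y ↦ y ^ 2)).symm
    _ = ∫ y, y ^ 2 ∂gaussianReal (m - c) v := by rw [gaussianReal_map_sub_const]
    _ = v + (m - c) ^ 2 := by linarith

lemma log_gaussianPDFReal (m : ℝ) {v : ℝ≥0} (hv : v ≠ 0) (x : ℝ) :
    log (gaussianPDFReal m v x) = -log (2 * π * v) / 2 - (x - m) ^ 2 / (2 * v) := by
  have hv' : (0 : ℝ) < v := by positivity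
  rw [gaussianPDFReal, log_mul (by positivity) (exp_pos _).ne', log_inv, log_sqrt (by positivity),
    log_exp]
  ring

lemma gaussianReal_absolutelyContinuous_gaussianReal (m₁ m₂ : ℝ) {v w : ℝ≥0} (hv : v ≠ 0)
    (hw : w ≠ 0) : gaussianReal m₁ v ≪ gaussianReal m₂ w :=
  (gaussianReal_absolutelyContinuous m₁ hv).trans (gaussianReal_absolutelyContinuous' m₂ hw)

lemma llr_gaussianReal (m₁ m₂ : ℝ) {v w : ℝ≥0} (hv : v ≠ 0) (hw : w ≠ 0) :
    llr (gaussianReal m₁ v) (gaussianReal m₂ w) =ᵐ[gaussianReal m₁ v]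
      fun x ↦ log (w / v) / 2 + (x - m₂) ^ 2 / (2 * w) - (x - m₁) ^ 2 / (2 * v) := by
  have hac := gaussianReal_absolutelyContinuous_gaussianReal m₁ m₂ hv hw
  have hratio := Measure.rnDeriv_eq_div (gaussianReal_absolutelyContinuous m₁ hv)
    (gaussianReal_absolutelyContinuous m₂ hw)
  have h₁ := (gaussianReal_absolutelyContinuous m₁ hv).ae_le (rnDeriv_gaussianReal m₁ v)
  have h₂ := (gaussianReal_absolutelyContinuous m₁ hv).ae_le (rnDeriv_gaussianReal m₂ w)
  filter_upwards [hac.ae_le hratio, h₁, h₂] with x hx hx₁ hx₂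
  have hv' : (0 : ℝ) < v := by positivity
  have hw' : (0 : ℝ) < w := by positivity
  rw [llr, hx, hx₁, hx₂, gaussianPDF, gaussianPDF, ENNReal.toReal_div,
    ENNReal.toReal_ofReal (gaussianPDFReal_nonneg _ _ _),
    ENNReal.toReal_ofReal (gaussianPDFReal_nonneg _ _ _),
    log_div (gaussianPDFReal_pos _ _ _ hv).ne' (gaussianPDFReal_pos _ _ _ hw).ne',
    log_gaussianPDFReal _ hv, log_gaussianPDFReal _ hw, log_div hw'.ne' hv'.ne',
    log_mul (by positivity) hv'.ne', log_mul (by positivity) hw'.ne']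
  ring

lemma klDiv_gaussianReal (m₁ m₂ : ℝ) {v w : ℝ≥0} (hv : v ≠ 0) (hw : w ≠ 0) :
    klDiv (gaussianReal m₁ v) (gaussianReal m₂ w) =
      ((log (w / v) + (v + (m₁ - m₂) ^ 2) / w - 1) / 2 : ℝ) := by
  have hllr := llr_gaussianReal m₁ m₂ hv hw
  have h₂ := (integrable_sub_sq_gaussianReal m₁ v m₂).div_const (2 * (w : ℝ))
  have h₁ := (integrable_sub_sq_gaussianReal m₁ v m₁).div_const (2 * (v : ℝ))
  have hint := ((integrable_const (log (w / v) / 2)).fun_add h₂).sub h₁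
  rw [klDiv, if_pos ⟨gaussianReal_absolutelyContinuous_gaussianReal m₁ m₂ hv hw,
    hint.congr hllr.symm⟩, integral_congr_ae hllr,
    integral_sub ((integrable_const _).fun_add h₂) h₁, integral_add (integrable_const _) h₂,
    integral_const, integral_div, integral_div, integral_sub_sq_gaussianReal,
    integral_sub_sq_gaussianReal]
  have hv' : (0 : ℝ) < v := by positivity
  have hw' : (0 : ℝ) < w := by positivity
  congr 1
  simp only [probReal_univ, one_smul, sub_self]
  field_simp
  ring

lemma log_div_add_div_sub_one_nonneg {q ω : ℝ} (hq : 0 < q) (hω : 0 < ω) :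
    0 ≤ log (ω / q) + q / ω - 1 := by
  have := log_le_sub_one_of_pos (div_pos hq hω)
  rw [← neg_neg (log (ω / q)), ← log_inv, inv_div]
  linarith

lemma log_div_add_div_sub_one_eq_zero_iff {q ω : ℝ} (hq : 0 < q) (hω : 0 < ω) :
    log (ω / q) + q / ω - 1 = 0 ↔ q = ω := by
  refine ⟨fun h ↦ ?_, by rintro rfl; simp [hq.ne']⟩
  by_contra hne
  have := log_lt_sub_one_of_pos (div_pos hq hω) (div_ne_one_of_ne hne)
  rw [← neg_neg (log (ω / q)), ← log_inv, inv_div] at h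
  linarith

lemma integral_const_add_eq_zero_iff {α : Type*} [MeasurableSpace α] {μ : Measure α}
    [IsProbabilityMeasure μ] {c : ℝ} {g : α → ℝ} (hc : 0 ≤ c) (hg : 0 ≤ g) (hgi : Integrable g μ) :
    ∫ x, (c + g x) ∂μ = 0 ↔ c = 0 ∧ g =ᵐ[μ] 0 := by
  rw [integral_add (integrable_const c) hgi, integral_const, probReal_univ, one_smul,
    ← integral_eq_zero_iff_of_nonneg hg hgi]
  have := integral_nonneg (μ := μ) hg
  constructor
  · intro h; constructor <;> linarith
  · rintro ⟨h₁, h₂⟩; rw [h₁, h₂, add_zero]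

theorem integral_klDiv_gaussian_affine_eq_zero_iff_general (μ : Measure ℝ) [IsProbabilityMeasure μ]
    (f : ℝ → ℝ) (q ω : ℝ≥0) (hq : 0 < q) (hω : 0 < ω) (a b : ℝ)
    (hint : Integrable (fun x ↦ (f x - a * x - b) ^ 2) μ) :
    ∫ x, (klDiv (gaussianReal (f x) q) (gaussianReal (a * x + b) ω)).toReal ∂μ = 0 ↔
      ω = q ∧ ∀ᵐ x ∂μ, f x = a * x + b := by
  have hq' : (0 : ℝ) < q := hq
  have hω' : (0 : ℝ) < ω := hω
  have hpointwise : ∀ x, (klDiv (gaussianReal (f x) q) (gaussianReal (a * x + b) ω)).toReal =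
      (log (ω / q) + q / ω - 1) / 2 + (f x - a * x - b) ^ 2 / (2 * ω) := by
    intro x
    rw [klDiv_gaussianReal _ _ hq.ne' hω.ne', EReal.toReal_coe]
    ring
  simp_rw [hpointwise]
  rw [integral_const_add_eq_zero_iff
    (div_nonneg (log_div_add_div_sub_one_nonneg hq' hω') zero_le_two)
    (fun x ↦ by positivity) (hint.div_const _)]
  refine and_congr ?_ (eventually_congr (Eventually.of_forall fun x ↦ ?_))
  · rw [div_eq_zero_iff, log_div_add_div_sub_one_eq_zero_iff hq' hω', eq_comm, NNReal.coe_inj]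
    simp
  · simp [hω.ne', sub_sub, sub_eq_zero]

/-- The expected KL divergence `∫ KL(N(f x, q) ‖ N(a x + b, ω)) dμ(x)` vanishes if and only if
`ω = q` and `f x = a x + b` for `μ`-almost every `x`. -/
theorem integral_klDiv_gaussian_affine_eq_zero_iff (μ : Measure ℝ) [IsProbabilityMeasure μ]
    (f : ℝ → ℝ) (hf : Measurable f) (q ω : ℝ≥0) (hq : 0 < q) (hω : 0 < ω) (a b : ℝ)
    (hint : Integrable (fun x ↦ (f x - a * x - b) ^ 2) μ) :
    ∫ x, (klDiv (gaussianReal (f x) q) (gaussianReal (a * x + b) ω)).toReal ∂μ = 0 ↔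
      ω = q ∧ ∀ᵐ x ∂μ, f x = a * x + b :=
  integral_klDiv_gaussian_affine_eq_zero_iff_general μ f q ω hq hω a b hint
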